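/- arXiv:2209.01343 — 2 statements merged into one kernel-verified Lean document; each statement's English description precedes it below -/
import Mathlib

section
/- Let X ⊆ ℂⁿ be open, let U ⊆ X be a dense open subset, let F̄ be a holomorphic family of r-dimensional subspaces of V₀ over X, and let f : X → V₀ be holomorphic with f(u) ∈ F̄(u) for every u ∈ U. Then f(x) ∈ F̄(x) for every x ∈ X. -/
/-- A holomorphic family of `r`-dimensional subspaces of `V₀` over a set `W ⊆ ℂⁿ`:
every point of `W` has an open neighborhood `W' ⊆ W` on which there are holomorphic maps
`f₁, …, f_r : W' → V₀` whose values are linearly independent and span `F w` at every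
`w ∈ W'`. -/
def IsHolomorphicFamily {n : ℕ} {V₀ : Type*} [NormedAddCommGroup V₀] [NormedSpace ℂ V₀]
    (W : Set (Fin n → ℂ)) (r : ℕ) (F : (Fin n → ℂ) → Submodule ℂ V₀) : Prop :=
  ∀ x ∈ W, ∃ W' : Set (Fin n → ℂ), IsOpen W' ∧ x ∈ W' ∧ W' ⊆ W ∧
    ∃ f : Fin r → (Fin n → ℂ) → V₀,
      (∀ i, DifferentiableOn ℂ (f i) W') ∧
      ∀ w ∈ W', LinearIndependent ℂ (fun i => f i w) ∧
        Submodule.span ℂ (Set.range fun i => f i w) = F w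

/-- Let `X ⊆ ℂⁿ` be open, `U ⊆ X` a dense open subset, `F̄` a holomorphic
family of `r`-dimensional subspaces of `V₀` over `X`, and `f : X → V₀` holomorphic with
`f(u) ∈ F̄(u)` for all `u ∈ U`. Then `f(x) ∈ F̄(x)` for all `x ∈ X`. -/
theorem mem_of_dense_mem {n r : ℕ} {V₀ : Type*} [NormedAddCommGroup V₀] [NormedSpace ℂ V₀]
    [FiniteDimensional ℂ V₀]
    (X U : Set (Fin n → ℂ)) (hX : IsOpen X) (hU : IsOpen U) (hUX : U ⊆ X)
    (hdense : X ⊆ closure U)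
    (Fbar : (Fin n → ℂ) → Submodule ℂ V₀) (hFbar : IsHolomorphicFamily X r Fbar)
    (f : (Fin n → ℂ) → V₀) (hf : DifferentiableOn ℂ f X)
    (hfU : ∀ u ∈ U, f u ∈ Fbar u) :
    ∀ x ∈ X, f x ∈ Fbar x := by
  intro x hx
  obtain ⟨W', hW'open, hxW', hW'X, g, hgdiff, hg⟩ := hFbar x hx
  obtain ⟨hindx, hspanx⟩ := hg x hxW'
  set G : (Fin n → ℂ) → Fin (r + 1) → V₀ := fun w => Fin.snoc (fun i => g i w) (f w) with hGdef
  have hGcont : ContinuousOn G W' := by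
    apply continuousOn_pi.2
    intro j
    refine Fin.lastCases ?_ ?_ j
    · have : (fun w => G w (Fin.last r)) = fun w => f w := by
        funext w; simp [hGdef]
      rw [this]
      exact (hf.mono hW'X).continuousOn
    · intro i
      have : (fun w => G w (Fin.castSucc i)) = fun w => g i w := by
        funext w; simp [hGdef]
      rw [this]
      exact (hgdiff i).continuousOn
  -- On U ∩ W', the tuple G u is linearly dependent.
  have hdep : ∀ u ∈ U ∩ W', ¬ LinearIndependent ℂ (G u) := by
    rintro u ⟨huU, huW'⟩ hind
    obtain ⟨-, hspan⟩ := hg u huW'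
    have : f u ∉ Submodule.span ℂ (Set.range fun i => g i u) :=
      (linearIndependent_fin_snoc.1 hind).2
    exact this (hspan ▸ hfU u huU)
  by_contra hnot
  have hfx : f x ∉ Submodule.span ℂ (Set.range fun i => g i x) := fun h => hnot (hspanx ▸ h)
  have hindGx : LinearIndependent ℂ (G x) :=
    linearIndependent_fin_snoc.2 ⟨hindx, hfx⟩
  have hopen : IsOpen { v : Fin (r + 1) → V₀ | LinearIndependent ℂ v } :=
    isOpen_setOf_linearIndependent
  have hnhds : G ⁻¹' { v : Fin (r + 1) → V₀ | LinearIndependent ℂ v } ∩ W' ∈ nhds x := by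
    have hc : ContinuousAt G x :=
      (hGcont.continuousAt (hW'open.mem_nhds hxW'))
    exact Filter.inter_mem (hc.preimage_mem_nhds (hopen.mem_nhds hindGx))
      (hW'open.mem_nhds hxW')
  obtain ⟨u, huN, huU⟩ :=
    mem_closure_iff_nhds.1 (hdense hx) _ hnhds
  exact hdep u ⟨huU, huN.2⟩ huN.1
end

section
/- Let X ⊆ ℂⁿ be open, S ⊆ X closed with empty interior, U = X∖S, and let H ⊆ ℂⁿ be a complex affine-linear subspace (identified with ℂ^m) such that Y = X ∩ H is nonempty and Y ∩ S has empty interior in Y. Let F be a holomorphic family of r-dimensional subspaces of V₀ over U. Assume: (i) there is a holomorphic family F_Y of r-dimensional subspaces of V₀ over Y (an open subset of H ≅ ℂ^m) with F_Y(y) = F(y) for all y ∈ U ∩ Y; (ii) for every y ∈ Y and every holomorphic map g from an open neighborhood of y in Y to V₀ satisfying g(w) ∈ F(w) for all w in U ∩ Y in that neighborhood, there exist an open neighborhood W of y in X and a holomorphic map G : W → V₀ with G = g on Y ∩ W and G(u) ∈ F(u) for all u ∈ U ∩ W. Then every point y ∈ Y has an open neighborhood W in X over which there exists a holomorphic family F̄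 of r-dimensional subspaces of V₀ with F̄(u) = F(u) for all u ∈ U ∩ W. -/
/-- Let `X ⊆ ℂⁿ` be open, `S ⊆ X` closed (in `X`) with empty interior,
`U = X \ S`, and let `H ⊆ ℂⁿ` be a complex affine-linear subspace, identified with `ℂᵐ` via an
affine embedding `φ z = b + L z` (`L` injective linear), such that `Y = X ∩ H` is nonempty and
`Y ∩ S` has empty interior in `Y`. Let `F` be a holomorphic family of `r`-dimensional
subspaces of `V₀` over `U`. Assume:
(i) there is a holomorphic family `F_Y` of `r`-dimensional subspaces over `Y` (read in the
chart `φ`) agreeing with `F` on `U ∩ Y`; and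
(ii) every local holomorphic section `g` of `F` along `Y` near a point of `Y` extends to a
holomorphic section `G` of `F` on a neighborhood in `X`.
Then every point of `Y` has an open neighborhood `W` in `X` over which there is a holomorphic
family `F̄` of `r`-dimensional subspaces of `V₀` with `F̄ = F` on `U ∩ W`. -/
theorem extend_family_near_hyperplane {n m r : ℕ} {V₀ : Type*} [NormedAddCommGroup V₀]
    [NormedSpace ℂ V₀] [FiniteDimensional ℂ V₀]
    (X S : Set (Fin n → ℂ)) (hX : IsOpen X) (hSX : S ⊆ X) (hS : IsOpen (X \ S))
    (hSint : interior S = ∅)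
    (L : (Fin m → ℂ) →ₗ[ℂ] (Fin n → ℂ)) (hL : Function.Injective L) (b : Fin n → ℂ)
    (φ : (Fin m → ℂ) → (Fin n → ℂ)) (hφ : ∀ z, φ z = b + L z)
    (hYne : (φ ⁻¹' X).Nonempty) (hYSint : interior (φ ⁻¹' S) = ∅)
    (F : (Fin n → ℂ) → Submodule ℂ V₀) (hF : IsHolomorphicFamily (X \ S) r F)
    -- (i) a holomorphic family over `Y` restricting `F` on `U ∩ Y`
    (FY : (Fin m → ℂ) → Submodule ℂ V₀) (hFY : IsHolomorphicFamily (φ ⁻¹' X) r FY)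
    (hFYF : ∀ z, φ z ∈ X \ S → FY z = F (φ z))
    -- (ii) local holomorphic sections of `F` along `Y` extend to sections of `F` over `X`
    (hext : ∀ z, φ z ∈ X →
      ∀ (Wg : Set (Fin m → ℂ)) (g : (Fin m → ℂ) → V₀), IsOpen Wg → z ∈ Wg →
        Wg ⊆ φ ⁻¹' X → DifferentiableOn ℂ g Wg →
        (∀ w ∈ Wg, φ w ∈ X \ S → g w ∈ F (φ w)) →
        ∃ W : Set (Fin n → ℂ), IsOpen W ∧ φ z ∈ W ∧ W ⊆ X ∧ φ ⁻¹' W ⊆ Wg ∧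
          ∃ G : (Fin n → ℂ) → V₀, DifferentiableOn ℂ G W ∧
            (∀ w, φ w ∈ W → G (φ w) = g w) ∧
            ∀ u ∈ W \ S, G u ∈ F u) :
    ∀ z, φ z ∈ X →
      ∃ W : Set (Fin n → ℂ), IsOpen W ∧ φ z ∈ W ∧ W ⊆ X ∧
        ∃ Fbar : (Fin n → ℂ) → Submodule ℂ V₀, IsHolomorphicFamily W r Fbar ∧
          ∀ u ∈ W \ S, Fbar u = F u := by
  intro z hz
  obtain ⟨W', hW'open, hzW', hW'sub, f, hfdiff, hfspan⟩ := hFY z hz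
  have hexti : ∀ i : Fin r, ∃ W : Set (Fin n → ℂ), IsOpen W ∧ φ z ∈ W ∧ W ⊆ X ∧
      φ ⁻¹' W ⊆ W' ∧ ∃ G : (Fin n → ℂ) → V₀, DifferentiableOn ℂ G W ∧
        (∀ w, φ w ∈ W → G (φ w) = f i w) ∧ ∀ u ∈ W \ S, G u ∈ F u := by
    intro i
    apply hext z hz W' (f i) hW'open hzW' hW'sub (hfdiff i)
    intro w hw hwXS
    have hsp := (hfspan w hw).2
    rw [hFYF w hwXS] at hsp
    rw [← hsp]
    exact Submodule.subset_span ⟨i, rfl⟩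
  choose Wi hWiopen hzWi hWiX hWipre G hGdiff hGφ hGF using hexti
  set T : Set (Fin n → ℂ) := (X ∩ ⋂ i, Wi i) ∩
    (fun u => fun i => G i u) ⁻¹' {v : Fin r → V₀ | LinearIndependent ℂ v} with hT
  have hInter : IsOpen (X ∩ ⋂ i, Wi i) := hX.inter (isOpen_iInter_of_finite hWiopen)
  have hTsub : ∀ i, T ⊆ Wi i := fun i u hu => Set.mem_iInter.mp hu.1.2 i
  have hcont : ContinuousOn (fun u => fun i => G i u) (X ∩ ⋂ i, Wi i) := by
    rw [continuousOn_pi]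
    intro i
    exact ((hGdiff i).continuousOn).mono (fun u hu => Set.mem_iInter.mp hu.2 i)
  have hTopen : IsOpen T := hcont.isOpen_inter_preimage hInter isOpen_setOf_linearIndependent
  have hzT : φ z ∈ T := by
    refine ⟨⟨hz, Set.mem_iInter.mpr hzWi⟩, ?_⟩
    have : (fun i => G i (φ z)) = fun i => f i z := funext fun i => hGφ i z (hzWi i)
    simp only [Set.mem_preimage, Set.mem_setOf_eq, this]
    exact (hfspan z hzW').1
  have hLI : ∀ u ∈ T, LinearIndependent ℂ (fun i => G i u) := fun u hu => hu.2
  refine ⟨T, hTopen, hzT, fun u hu => hu.1.1,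
    fun u => Submodule.span ℂ (Set.range fun i => G i u), ?_, ?_⟩
  · intro x hx
    refine ⟨T, hTopen, hx, le_refl T, G, fun i => (hGdiff i).mono (hTsub i), ?_⟩
    exact fun w hw => ⟨hLI w hw, rfl⟩
  · intro u hu
    have huXS : u ∈ X \ S := ⟨hu.1.1.1, hu.2⟩
    have hmem : ∀ i, G i u ∈ F u := fun i => hGF i u ⟨hTsub i hu.1, hu.2⟩
    have hle : Submodule.span ℂ (Set.range fun i => G i u) ≤ F u :=
      Submodule.span_le.mpr (Set.range_subset_iff.mpr hmem)
    obtain ⟨W'', _, huW'', _, g, _, hgspan⟩ := hF u huXS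
    have h1 : Module.finrank ℂ (Submodule.span ℂ (Set.range fun i => G i u)) = r := by
      rw [finrank_span_eq_card (hLI u hu.1), Fintype.card_fin]
    have h2 : Module.finrank ℂ (F u) = r := by
      rw [← (hgspan u huW'').2, finrank_span_eq_card (hgspan u huW'').1, Fintype.card_fin]
    exact Submodule.eq_of_le_of_finrank_eq hle (h1.trans h2.symm)
end
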